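/- arXiv:2005.14295 — 4 statements merged into one kernel-verified Lean document; each statement's English description precedes it below -/
import Mathlib

section
/- Let (E₁, M₁), …, (E_k, M_k) be orthogonal factorization systems on a category C forming a chain, i.e. M_j ⊆ M_{j+1} for 1 ≤ j ≤ k−1 (equivalently E_{j+1} ⊆ E_j). Then every morphism f : X ⟶ Y of C can be factored as a composite f = f₀ ∘ f₁ ∘ ⋯ ∘ f_k of k+1 morphisms, where the first morphism f_k lies in E_k, the last morphism f₀ lies in M₁, and the intermediate morphisms satisfy f_j ∈ E_j ∩ M_{j+1} for 1 ≤ j ≤ k−1; moreover such a factorization is unique up to isomorphism (any two such factorizations are related by isomorphisms of the intermediate objects commuting with all the morphisms). -/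
open CategoryTheory

universe v u

/-- Strong orthogonality `e ⊥ m`: every commutative square `u ≫ m = e ≫ v` admits a
unique diagonal filler. -/
def Orth {C : Type u} [Category.{v} C] {A B X Y : C} (e : A ⟶ B) (m : X ⟶ Y) : Prop :=
  ∀ (u : A ⟶ X) (v : B ⟶ Y), u ≫ m = e ≫ v → ∃! d : B ⟶ X, e ≫ d = u ∧ d ≫ m = v

/-- `(E, M)` is an orthogonal factorization system. -/
structure IsOFS {C : Type u} [Category.{v} C] (E M : MorphismProperty C) : Prop where
  iso_mem_E : ∀ {X Y : C} (f : X ⟶ Y), IsIso f → E f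
  iso_mem_M : ∀ {X Y : C} (f : X ⟶ Y), IsIso f → M f
  comp_mem_E : ∀ {X Y Z : C} (f : X ⟶ Y) (g : Y ⟶ Z), E f → E g → E (f ≫ g)
  comp_mem_M : ∀ {X Y Z : C} (f : X ⟶ Y) (g : Y ⟶ Z), M f → M g → M (f ≫ g)
  fact : ∀ {X Y : C} (f : X ⟶ Y),
    ∃ (F : C) (e : X ⟶ F) (m : F ⟶ Y), E e ∧ M m ∧ e ≫ m = f
  orth : ∀ {A B X Y : C} (e : A ⟶ B) (m : X ⟶ Y), E e → M m → Orth e m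

/-- Composite `Z (j+1) ⟶ Z j ⟶ ⋯ ⟶ Z 1` of a chain of morphisms
`g j : Z (j+2) ⟶ Z (j+1)`. -/
def chainComp {C : Type u} [Category.{v} C] (Z : ℕ → C)
    (g : ∀ j : ℕ, Z (j + 2) ⟶ Z (j + 1)) : ∀ j : ℕ, (Z (j + 1) ⟶ Z 1)
  | 0 => 𝟙 (Z 1)
  | j + 1 => g j ≫ chainComp Z g j

/-! Induction on the number of systems, splitting off the bottom one. For existence, factor `f`
through the shorter chain `(E 2, M 2) ⪯ ⋯` and then factor its last morphism `m' ∈ M 2` as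
`a ≫ m` with respect to `(E 1, M 1)`; the new morphism `a` lies in `M 2` since `M 1 ⊆ M 2` and
right classes are closed under right cancellation. For uniqueness, the inductive hypothesis gives
the isomorphisms at levels `≥ 2`, and the one at level `1` is the comparison isomorphism between
two `(E 1, M 1)`-factorizations of `g 0 ≫ m`. -/

namespace Orth

variable {C : Type u} [Category.{v} C] {A B X Y : C} {e : A ⟶ B} {m : X ⟶ Y}

theorem hom_ext (h : Orth e m) {d₁ d₂ : B ⟶ X} (he : e ≫ d₁ = e ≫ d₂) (hm : d₁ ≫ m = d₂ ≫ m) :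
    d₁ = d₂ :=
  (h (e ≫ d₂) (d₂ ≫ m) (by simp)).unique ⟨he, hm⟩ ⟨rfl, rfl⟩

end Orth

namespace IsOFS

variable {C : Type u} [Category.{v} C] {E M : MorphismProperty C}

theorem exists_iso_of_comp_eq (hEM : IsOFS E M) {X Y B B' : C}
    {e : X ⟶ B} {m : B ⟶ Y} {e' : X ⟶ B'} {m' : B' ⟶ Y}
    (he : E e) (hm : M m) (he' : E e') (hm' : M m') (hfac : e ≫ m = e' ≫ m') :
    ∃ φ : B ≅ B', e ≫ φ.hom = e' ∧ φ.hom ≫ m' = m := by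
  obtain ⟨d, ⟨hd₁, hd₂⟩, -⟩ := hEM.orth e m' he hm' e' m hfac.symm
  obtain ⟨d', ⟨hd'₁, hd'₂⟩, -⟩ := hEM.orth e' m he' hm e m' hfac
  refine ⟨⟨d, d', ?_, ?_⟩, hd₁, hd₂⟩
  · exact (hEM.orth e m he hm).hom_ext (by simp [reassoc_of% hd₁, hd'₁]) (by simp [hd'₂, hd₂])
  · exact (hEM.orth e' m' he' hm').hom_ext (by simp [reassoc_of% hd'₁, hd₁]) (by simp [hd₂, hd'₂])

theorem M_of_orth (hEM : IsOFS E M) {X Y : C} {m : X ⟶ Y}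
    (h : ∀ {A B : C} (e : A ⟶ B), E e → Orth e m) : M m := by
  obtain ⟨F, e, m₀, he, hm₀, rfl⟩ := hEM.fact m
  obtain ⟨d, ⟨hd₁, hd₂⟩, -⟩ := h e he (𝟙 X) m₀ (by simp)
  have hd : d ≫ e = 𝟙 F :=
    (hEM.orth e m₀ he hm₀).hom_ext (by simp [reassoc_of% hd₁]) (by simpa using hd₂)
  exact hEM.comp_mem_M e m₀ (hEM.iso_mem_M e ⟨d, hd₁, hd⟩) hm₀

theorem M_of_postcomp (hEM : IsOFS E M) {X Y Z : C} {g : X ⟶ Y} {m : Y ⟶ Z}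
    (hgm : M (g ≫ m)) (hm : M m) : M g := by
  refine hEM.M_of_orth fun e he u v hsq => ?_
  obtain ⟨d, ⟨hd₁, hd₂⟩, -⟩ := hEM.orth e (g ≫ m) he hgm u (v ≫ m) (by simp [reassoc_of% hsq])
  have hdg : d ≫ g = v :=
    (hEM.orth e m he hm).hom_ext (by simp [reassoc_of% hd₁, hsq]) (by simpa using hd₂)
  refine ⟨d, ⟨hd₁, hdg⟩, fun d' ⟨hd'₁, hd'₂⟩ => ?_⟩
  exact (hEM.orth e (g ≫ m) he hgm).hom_ext (by rw [hd₁, hd'₁])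
    (by rw [reassoc_of% hd'₂, reassoc_of% hdg])

end IsOFS

section Chain

variable {C : Type u} [Category.{v} C]

theorem chainComp_succ (Z : ℕ → C) (g : ∀ j : ℕ, Z (j + 2) ⟶ Z (j + 1)) (n : ℕ) :
    chainComp Z g (n + 1) = chainComp (fun j => Z (j + 1)) (fun j => g (j + 1)) n ≫ g 0 := by
  induction n with
  | zero => simp [chainComp]
  | succ n ih => rw [chainComp, ih, chainComp, Category.assoc]

/-- Index `0` is never read by `chainComp`, so its value `F` is a placeholder. -/
def chainConsObj (Z : ℕ → C) (F : C) : ℕ → C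
  | 0 => F
  | 1 => F
  | j + 2 => Z (j + 1)

def chainConsHom {Z : ℕ → C} {F : C} (g : ∀ j : ℕ, Z (j + 2) ⟶ Z (j + 1)) (a : Z 1 ⟶ F) :
    ∀ j : ℕ, chainConsObj Z F (j + 2) ⟶ chainConsObj Z F (j + 1)
  | 0 => a
  | j + 1 => g j

theorem chainComp_chainCons {Z : ℕ → C} {F : C} (g : ∀ j : ℕ, Z (j + 2) ⟶ Z (j + 1))
    (a : Z 1 ⟶ F) (n : ℕ) :
    chainComp (chainConsObj Z F) (chainConsHom g a) (n + 1) = chainComp Z g n ≫ a := by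
  induction n with
  | zero => exact (Category.comp_id a).trans (Category.id_comp a).symm
  | succ n ih => rw [chainComp, ih, chainComp, Category.assoc]; rfl

end Chain

section Factorization

variable {C : Type u} [Category.{v} C] {E M : ℕ → MorphismProperty C} {n : ℕ}

structure IsOFSChain (E M : ℕ → MorphismProperty C) (n : ℕ) : Prop where
  isOFS : ∀ j : ℕ, 1 ≤ j → j ≤ n + 1 → IsOFS (E j) (M j)
  le_succ : ∀ j : ℕ, 1 ≤ j → j ≤ n → M j ≤ M (j + 1)

def IsChainFactorization (E M : ℕ → MorphismProperty C) (n : ℕ) {X Y : C} (f : X ⟶ Y)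
    (Z : ℕ → C) (e : X ⟶ Z (n + 1)) (g : ∀ j : ℕ, Z (j + 2) ⟶ Z (j + 1)) (m : Z 1 ⟶ Y) :
    Prop :=
  E (n + 1) e ∧ M 1 m ∧ (∀ j : ℕ, j < n → E (j + 1) (g j) ∧ M (j + 2) (g j)) ∧
    e ≫ chainComp Z g n ≫ m = f

namespace IsOFSChain

theorem isOFS_one (hC : IsOFSChain E M n) : IsOFS (E 1) (M 1) :=
  hC.isOFS 1 le_rfl (by omega)

theorem isOFS_two (hC : IsOFSChain E M (n + 1)) : IsOFS (E 2) (M 2) :=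
  hC.isOFS 2 (by omega) (by omega)

theorem M_one_le_M_two (hC : IsOFSChain E M (n + 1)) : M 1 ≤ M 2 :=
  hC.le_succ 1 le_rfl (by omega)

theorem tail (hC : IsOFSChain E M (n + 1)) :
    IsOFSChain (fun j => E (j + 1)) (fun j => M (j + 1)) n :=
  ⟨fun j _ hj => hC.isOFS (j + 1) (by omega) (by omega),
    fun j _ hj => hC.le_succ (j + 1) (by omega) (by omega)⟩

end IsOFSChain

namespace IsChainFactorization

variable {X Y : C} {f : X ⟶ Y}

theorem tail {Z : ℕ → C} {e : X ⟶ Z (n + 2)} {g : ∀ j : ℕ, Z (j + 2) ⟶ Z (j + 1)} {m : Z 1 ⟶ Y}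
    (hC : IsOFSChain E M (n + 1)) (h : IsChainFactorization E M (n + 1) f Z e g m) :
    IsChainFactorization (fun j => E (j + 1)) (fun j => M (j + 1)) n f
      (fun j => Z (j + 1)) e (fun j => g (j + 1)) (g 0 ≫ m) := by
  obtain ⟨he, hm, hg, hfac⟩ := h
  refine ⟨he, ?_, fun j hj => hg (j + 1) (by omega), ?_⟩
  · exact hC.isOFS_two.comp_mem_M _ _ (hg 0 (by omega)).2 (hC.M_one_le_M_two m hm)
  · rwa [chainComp_succ, Category.assoc] at hfac

theorem cons {Z : ℕ → C} {e : X ⟶ Z (n + 1)} {g : ∀ j : ℕ, Z (j + 2) ⟶ Z (j + 1)} {F : C}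
    {a : Z 1 ⟶ F} {m : F ⟶ Y}
    (h : IsChainFactorization (fun j => E (j + 1)) (fun j => M (j + 1)) n f Z e g (a ≫ m))
    (haE : E 1 a) (haM : M 2 a) (hm : M 1 m) :
    IsChainFactorization E M (n + 1) f (chainConsObj Z F) e (chainConsHom g a) m := by
  obtain ⟨he, -, hg, hfac⟩ := h
  refine ⟨he, hm, ?_, ?_⟩
  · rintro (_ | j) hj
    · exact ⟨haE, haM⟩
    · exact hg j (by omega)
  · exact (congrArg (fun k => e ≫ k ≫ m) (chainComp_chainCons g a n)).trans (by simpa using hfac)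

end IsChainFactorization

namespace IsOFSChain

theorem exists_isChainFactorization (hC : IsOFSChain E M n) {X Y : C} (f : X ⟶ Y) :
    ∃ (Z : ℕ → C) (e : X ⟶ Z (n + 1)) (g : ∀ j : ℕ, Z (j + 2) ⟶ Z (j + 1)) (m : Z 1 ⟶ Y),
      IsChainFactorization E M n f Z e g m := by
  induction n generalizing E M with
  | zero =>
    obtain ⟨F, e, m, he, hm, rfl⟩ := hC.isOFS_one.fact f
    exact ⟨fun _ => F, e, fun _ => 𝟙 F, m, he, hm, by simp, by simp [chainComp]⟩
  | succ n ih =>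
    obtain ⟨Z, e, g, m', h⟩ := ih hC.tail
    obtain ⟨F, a, m, haE, hm, rfl⟩ := hC.isOFS_one.fact m'
    have haM : M 2 a := hC.isOFS_two.M_of_postcomp h.2.1 (hC.M_one_le_M_two m hm)
    exact ⟨_, _, _, _, h.cons haE haM hm⟩

theorem isChainFactorization_unique (hC : IsOFSChain E M n) {X Y : C} {f : X ⟶ Y}
    {Z Z' : ℕ → C} {e : X ⟶ Z (n + 1)} {e' : X ⟶ Z' (n + 1)}
    {g : ∀ j : ℕ, Z (j + 2) ⟶ Z (j + 1)} {g' : ∀ j : ℕ, Z' (j + 2) ⟶ Z' (j + 1)}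
    {m : Z 1 ⟶ Y} {m' : Z' 1 ⟶ Y}
    (h : IsChainFactorization E M n f Z e g m) (h' : IsChainFactorization E M n f Z' e' g' m') :
    ∃ φ : ∀ j : Fin (n + 1), Z (j.val + 1) ≅ Z' (j.val + 1),
      e ≫ (φ ⟨n, Nat.lt_succ_self n⟩).hom = e' ∧
      (φ ⟨0, Nat.succ_pos n⟩).hom ≫ m' = m ∧
      ∀ (j : ℕ) (hj : j < n),
        g j ≫ (φ ⟨j, Nat.lt_succ_of_lt hj⟩).hom = (φ ⟨j + 1, Nat.succ_lt_succ hj⟩).hom ≫ g' j := by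
  induction n generalizing E M Z Z' with
  | zero =>
    obtain ⟨he, hm, -, hfac⟩ := h
    obtain ⟨he', hm', -, hfac'⟩ := h'
    obtain ⟨ψ, hψe, hψm⟩ := hC.isOFS_one.exists_iso_of_comp_eq he hm he' hm'
      (by simpa [chainComp] using hfac.trans hfac'.symm)
    exact ⟨Fin.cons ψ finZeroElim, hψe, hψm, fun j hj => absurd hj (Nat.not_lt_zero j)⟩
  | succ n ih =>
    obtain ⟨φ, hφe, hφm, hφg⟩ := ih hC.tail (h.tail hC) (h'.tail hC)
    obtain ⟨-, hm, hg, -⟩ := h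
    obtain ⟨-, hm', hg', -⟩ := h'
    have hEM := hC.isOFS_one
    obtain ⟨ψ, hψg, hψm⟩ := hEM.exists_iso_of_comp_eq (hg 0 (by omega)).1 hm
      (hEM.comp_mem_E _ _ (hEM.iso_mem_E _ (φ 0).isIso_hom) (hg' 0 (by omega)).1) hm'
      (by simpa using hφm.symm)
    refine ⟨Fin.cons ψ φ, hφe, hψm, ?_⟩
    rintro (_ | j) hj
    · exact hψg
    · exact hφg j (by omega)

end IsOFSChain

end Factorization

/-- with `k = n + 1 ≥ 1`: given a chain of orthogonal factorization
systems `(E 1, M 1) ⪯ ⋯ ⪯ (E (n+1), M (n+1))` (i.e. `M j ⊆ M (j+1)`), every morphism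
`f : X ⟶ Y` factors as `X ⟶ Z (n+1) ⟶ ⋯ ⟶ Z 1 ⟶ Y` where the first morphism lies in
`E (n+1)`, the last lies in `M 1`, and the intermediate ones lie in `E (j+1) ∩ M (j+2)`;
moreover such a factorization is unique up to isomorphisms of the intermediate objects
commuting with all the morphisms. -/
theorem k_fold_factorization {C : Type u} [Category.{v} C] (n : ℕ)
    (E M : ℕ → MorphismProperty C)
    (hOFS : ∀ j : ℕ, 1 ≤ j → j ≤ n + 1 → IsOFS (E j) (M j))
    (hchain : ∀ j : ℕ, 1 ≤ j → j ≤ n → ∀ {X Y : C} (f : X ⟶ Y), M j f → M (j + 1) f)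
    {X Y : C} (f : X ⟶ Y) :
    (∃ (Z : ℕ → C) (e : X ⟶ Z (n + 1)) (g : ∀ j : ℕ, Z (j + 2) ⟶ Z (j + 1))
        (m : Z 1 ⟶ Y),
        E (n + 1) e ∧ M 1 m ∧
        (∀ j : ℕ, j < n → E (j + 1) (g j) ∧ M (j + 2) (g j)) ∧
        e ≫ chainComp Z g n ≫ m = f) ∧
    (∀ (Z Z' : ℕ → C) (e : X ⟶ Z (n + 1)) (e' : X ⟶ Z' (n + 1))
        (g : ∀ j : ℕ, Z (j + 2) ⟶ Z (j + 1)) (g' : ∀ j : ℕ, Z' (j + 2) ⟶ Z' (j + 1))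
        (m : Z 1 ⟶ Y) (m' : Z' 1 ⟶ Y),
        E (n + 1) e → M 1 m →
        (∀ j : ℕ, j < n → E (j + 1) (g j) ∧ M (j + 2) (g j)) →
        e ≫ chainComp Z g n ≫ m = f →
        E (n + 1) e' → M 1 m' →
        (∀ j : ℕ, j < n → E (j + 1) (g' j) ∧ M (j + 2) (g' j)) →
        e' ≫ chainComp Z' g' n ≫ m' = f →
        ∃ h : ∀ j : Fin (n + 1), Z (j.val + 1) ≅ Z' (j.val + 1),
          e ≫ (h ⟨n, Nat.lt_succ_self n⟩).hom = e' ∧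
          (h ⟨0, Nat.succ_pos n⟩).hom ≫ m' = m ∧
          ∀ (j : ℕ) (hj : j < n),
            g j ≫ (h ⟨j, Nat.lt_succ_of_lt hj⟩).hom =
              (h ⟨j + 1, Nat.succ_lt_succ hj⟩).hom ≫ g' j) := by
  have hC : IsOFSChain E M n := ⟨hOFS, fun j h₁ h₂ _ _ u hu => hchain j h₁ h₂ u hu⟩
  exact ⟨hC.exists_isChainFactorization f,
    fun _ _ _ _ _ _ _ _ he hm hg hfac he' hm' hg' hfac' =>
      hC.isChainFactorization_unique ⟨he, hm, hg, hfac⟩ ⟨he', hm', hg', hfac'⟩⟩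
end

section
/- Let T be a monad on a category C and let (E, M) be an orthogonal factorization system on C such that the underlying endofunctor of T preserves the class E (if e ∈ E then T.map e ∈ E). Let U : Algebra T ⥤ C denote the forgetful functor from the Eilenberg–Moore category of T-algebras. Then the classes E' = { f | U.map f ∈ E } and M' = { f | U.map f ∈ M } form an orthogonal factorization system on Algebra T: every morphism of T-algebras factors as a morphism in E' followed by a morphism in M', each class contains all isomorphisms and is closed under composition, and every morphism in E' is strongly orthogonal (in Algebra T) to every morphism in M'. -/
/-!
Because `T` preserves `E`, the squares that a lift to algebras has to fill are again `E ⊥ M`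
squares. The structure map of the middle object of an `(E, M)`-factorization `U f = m ∘ e` is
the diagonal filler of a square with sides `T e` and `m`; the algebra laws, and the
compatibility of a diagonal filler with the structure maps, hold because both sides of each
equation fill one and the same `E ⊥ M` square.
-/

open CategoryTheory

universe v u

theorem Orth.ext {C : Type u} [Category.{v} C] {A B X Y : C} {e : A ⟶ B} {m : X ⟶ Y}
    (h : Orth e m) {d₁ d₂ : B ⟶ X} (he : e ≫ d₁ = e ≫ d₂) (hm : d₁ ≫ m = d₂ ≫ m) :
    d₁ = d₂ := by
  obtain ⟨d, -, hd⟩ := h (e ≫ d₂) (d₂ ≫ m) (Category.assoc _ _ _)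
  exact (hd d₁ ⟨he, hm⟩).trans (hd d₂ ⟨rfl, rfl⟩).symm

namespace CategoryTheory.Monad

variable {C : Type u} [Category.{v} C] {T : Monad C}

section DiagonalAlgebraStructure

/- Such a diagonal `a` exists when `e ≫ m` is a morphism of algebras and `T.map e ⊥ m`. -/
variable {X Y : Algebra T} {F : C} {e : X.A ⟶ F} {m : F ⟶ Y.A} {a : T.obj F ⟶ F}
  (ha₁ : T.map e ≫ a = X.a ≫ e) (ha₂ : a ≫ m = T.map m ≫ Y.a)
include ha₁ ha₂

theorem η_comp_diag_eq_id (he : Orth e m) : T.η.app F ≫ a = 𝟙 F := by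
  refine he.ext ?_ ?_
  · rw [T.unit_naturality_assoc, ha₁, X.unit_assoc, Category.comp_id]
  · rw [Category.assoc, ha₂, ← T.unit_naturality_assoc, Y.unit, Category.comp_id,
      Category.id_comp]

theorem μ_comp_diag_eq_map_comp (hTTe : Orth (T.map (T.map e)) m) :
    T.μ.app F ≫ a = T.map a ≫ a := by
  refine hTTe.ext ?_ ?_
  · rw [T.mu_naturality_assoc, ha₁, ← Functor.map_comp_assoc, ha₁, Functor.map_comp_assoc,
      ha₁, X.assoc_assoc]
  · rw [Category.assoc, ha₂, ← T.mu_naturality_assoc, Category.assoc, ha₂,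
      ← Functor.map_comp_assoc, ha₂, Functor.map_comp_assoc, Y.assoc]

end DiagonalAlgebraStructure

theorem Algebra.orth_of_orth_forget {A B X Y : Algebra T} (e : A ⟶ B) (m : X ⟶ Y)
    (he : Orth e.f m.f) (hTe : Orth (T.map e.f) m.f) : Orth e m := by
  intro u v huv
  obtain ⟨d, ⟨hd₁, hd₂⟩, hd⟩ := he u.f v.f (congrArg Algebra.Hom.f huv)
  have hd_alg : T.map d ≫ X.a = B.a ≫ d := by
    refine hTe.ext ?_ ?_
    · rw [← Functor.map_comp_assoc, hd₁, u.h, e.h_assoc, hd₁]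
    · rw [Category.assoc, ← m.h, ← Functor.map_comp_assoc, hd₂, v.h, Category.assoc, hd₂]
  refine ⟨⟨d, hd_alg⟩, ⟨Algebra.Hom.ext hd₁, Algebra.Hom.ext hd₂⟩, fun d' hd' => ?_⟩
  exact Algebra.Hom.ext
    (hd d'.f ⟨congrArg Algebra.Hom.f hd'.1, congrArg Algebra.Hom.f hd'.2⟩)

theorem Algebra.exists_factorization_of_isOFS {E M : MorphismProperty C} (h : IsOFS E M)
    (hT : ∀ {X Y : C} (e : X ⟶ Y), E e → E (T.map e)) {X Y : Algebra T} (f : X ⟶ Y) :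
    ∃ (Z : Algebra T) (e : X ⟶ Z) (m : Z ⟶ Y), E e.f ∧ M m.f ∧ e ≫ m = f := by
  obtain ⟨F, e, m, he, hm, hf⟩ := h.fact f.f
  have hsq : (X.a ≫ e) ≫ m = T.map e ≫ T.map m ≫ Y.a := by
    rw [Category.assoc, hf, ← f.h, ← hf, Functor.map_comp_assoc]
  obtain ⟨a, ⟨ha₁, ha₂⟩, -⟩ := h.orth _ _ (hT e he) hm _ _ hsq
  let Z : Algebra T :=
    { A := F, a := a
      unit := η_comp_diag_eq_id ha₁ ha₂ (h.orth e m he hm)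
      assoc := μ_comp_diag_eq_map_comp ha₁ ha₂ (h.orth _ m (hT _ (hT e he)) hm) }
  exact ⟨Z, ⟨e, ha₁⟩, ⟨m, ha₂.symm⟩, he, hm, Algebra.Hom.ext hf⟩

end CategoryTheory.Monad

/-- If `T` is a monad on `C` whose underlying endofunctor preserves the
left class of an orthogonal factorization system `(E, M)` on `C`, then the preimages of
`E` and `M` under the forgetful functor from the Eilenberg–Moore category of
`T`-algebras form an orthogonal factorization system on `Monad.Algebra T`. -/
theorem ofs_lifts_to_algebras {C : Type u} [Category.{v} C] (T : Monad C)
    (E M : MorphismProperty C) (h : IsOFS E M)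
    (hT : ∀ {X Y : C} (e : X ⟶ Y), E e → E (T.toFunctor.map e)) :
    IsOFS (C := Monad.Algebra T)
      (fun _ _ f => E ((Monad.forget T).map f))
      (fun _ _ f => M ((Monad.forget T).map f)) := by
  refine ⟨fun f _ => h.iso_mem_E _ inferInstance, fun f _ => h.iso_mem_M _ inferInstance,
    fun f g => h.comp_mem_E f.f g.f, fun f g => h.comp_mem_M f.f g.f,
    Monad.Algebra.exists_factorization_of_isOFS h hT, fun e m he hm => ?_⟩
  exact Monad.Algebra.orth_of_orth_forget e m (h.orth _ _ he hm) (h.orth _ _ (hT _ he) hm)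
end

section
/- Let D be a pretriangulated category and let (D≥0, D<0) be a t-structure on D. Then the heart of the t-structure — the full subcategory of D on the objects X such that X ∈ D≥0 and X⟦-1⟧ ∈ D<0 — is an abelian category (with the additive structure inherited from D). -/
/-!
The heart is abelian by the criterion of [BBD, 1.2] (`Triangulated.AbelianSubcategory`): there
are no morphisms `X ⟶ Y⟦n⟧` with `n < 0` between objects of the heart, and the cone of a
morphism `f` of the heart lies in degrees `[-1, 0]`, so its truncation triangle
`K⟦1⟧ ⟶ cone f ⟶ Q ⟶ K⟦2⟧` exhibits `K` as the kernel and `Q` as the cokernel of `f`.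
For a mono `K = 0`, so the cone is itself in the heart and `X ⟶ Y ⟶ Q` presents `f` as the
kernel of `Y ⟶ Q`; dually for an epi. Normal monos and epis, unlike image factorisations, do
not need the octahedral axiom, which is why the pretriangulated axioms suffice.
-/

open CategoryTheory CategoryTheory.Limits CategoryTheory.Pretriangulated ZeroObject

universe v u

namespace CategoryTheory.Triangulated

namespace AbelianSubcategory

variable {C A : Type*} [Category* C] [HasZeroObject C] [Preadditive C] [HasShift C ℤ]
  [∀ n : ℤ, (shiftFunctor C n).Additive] [Pretriangulated C]
  [Category* A] [Preadditive A] {ι : A ⥤ C} [ι.Full] [ι.Faithful] [ι.Additive]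

lemma exists_distinguished_triangle_of_mono
    (hι : ∀ ⦃X Y : A⦄ ⦃n : ℤ⦄ (f : ι.obj X ⟶ (ι.obj Y)⟦n⟧), n < 0 → f = 0)
    (hA : admissibleMorphism ι = ⊤) {X₁ X₂ : A} (i : X₁ ⟶ X₂) [Mono i] :
    ∃ (X₃ : A) (π : X₂ ⟶ X₃) (δ : ι.obj X₃ ⟶ (ι.obj X₁)⟦(1 : ℤ)⟧),
      Triangle.mk (ι.map i) (ι.map π) δ ∈ distTriang C := by
  obtain ⟨X₃, f₂, f₃, hT⟩ := distinguished_cocone_triangle (ι.map i)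
  obtain ⟨K, Q, α, β, γ, hT'⟩ := (show admissibleMorphism ι i by simp [hA]) f₂ f₃ hT
  have := mono_ιK hι hT hT'
  have hK : IsZero K := IsZero.of_mono_eq_zero (ιK f₃ α) (by
    rw [← cancel_mono i, ιK_mor₁ hT, zero_comp])
  have : IsIso β := (Triangle.isZero₁_iff_isIso₂ _ hT').1
    ((shiftFunctor C (1 : ℤ)).map_isZero (ι.map_isZero hK))
  refine ⟨Q, πQ f₂ β, inv β ≫ f₃, isomorphic_distinguished _ hT _ ?_⟩
  refine Triangle.isoMk _ _ (Iso.refl _) (Iso.refl _) (asIso β).symm ?_ ?_ ?_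
  · exact (Category.comp_id _).trans (Category.id_comp _).symm
  · change ι.map (πQ f₂ β) ≫ inv β = 𝟙 _ ≫ f₂
    simp
  · change (inv β ≫ f₃) ≫ (𝟙 (ι.obj X₁))⟦(1 : ℤ)⟧' = inv β ≫ f₃
    simp

end AbelianSubcategory

namespace TStructure

variable {C : Type*} [Category* C] [Preadditive C] [HasZeroObject C] [HasShift C ℤ]
  [∀ n : ℤ, (shiftFunctor C n).Additive] [Pretriangulated C] (t : TStructure C)

instance : t.heart.ContainsZero :=
  ⟨0, isZero_zero C, (t.mem_heart_iff 0).2 ⟨inferInstance, inferInstance⟩⟩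

lemma heart₂ (T : Triangle C) (hT : T ∈ distTriang C) (h₁ : t.heart T.obj₁)
    (h₃ : t.heart T.obj₃) : t.heart T.obj₂ := by
  rw [mem_heart_iff] at *
  exact ⟨t.isLE₂ T hT 0 h₁.1 h₃.1, t.isGE₂ T hT 0 h₁.2 h₃.2⟩

instance : t.heart.IsClosedUnderBinaryProducts where
  limitsOfShape_le := by
    rintro X ⟨p⟩
    refine t.heart.prop_of_iso ?_ (t.heart₂ _ (binaryProductTriangle_distinguished _ _)
      (p.prop_diag_obj (.mk .left)) (p.prop_diag_obj (.mk .right)))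
    exact IsLimit.conePointUniqueUpToIso (prodIsProd _ _)
      ((IsLimit.postcomposeHomEquiv (diagramIsoPair p.diag) _).2 p.isLimit)

instance : t.heart.IsClosedUnderFiniteProducts := .mk'

instance (X : t.heart.FullSubcategory) : t.IsLE (t.heart.ι.obj X) 0 := ⟨X.2.1⟩

instance (X : t.heart.FullSubcategory) : t.IsGE (t.heart.ι.obj X) 0 := ⟨X.2.2⟩

lemma heart_hom_shift_eq_zero ⦃X Y : t.heart.FullSubcategory⦄ ⦃n : ℤ⦄
    (f : t.heart.ι.obj X ⟶ (t.heart.ι.obj Y)⟦n⟧) (hn : n < 0) : f = 0 := by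
  have : t.IsGE ((t.heart.ι.obj Y)⟦n⟧) (-n) := t.isGE_shift _ 0 n (-n)
  exact t.zero f 0 (-n)

lemma exists_distTriang_heart_of_isLE_of_isGE (X : C) [t.IsLE X 0] [t.IsGE X (-1)] :
    ∃ (K Q : t.heart.FullSubcategory) (α : (t.heart.ι.obj K)⟦(1 : ℤ)⟧ ⟶ X)
      (β : X ⟶ t.heart.ι.obj Q) (γ : t.heart.ι.obj Q ⟶ (t.heart.ι.obj K)⟦(1 : ℤ)⟧⟦(1 : ℤ)⟧),
      Triangle.mk α β γ ∈ distTriang C := by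
  obtain ⟨A, Q, hA, hQ, α, β, γ, hT⟩ := t.exists_triangle X (-1) 0 (by lia)
  have : t.IsLE A (-1) := ⟨hA⟩
  have : t.IsGE Q 0 := ⟨hQ⟩
  have : t.IsLE (A⟦(1 : ℤ)⟧) (-2) := t.isLE_shift _ (-1) 1 (-2)
  have : t.IsLE (A⟦(1 : ℤ)⟧) 0 := t.isLE_of_le _ (-2) 0
  have : t.IsLE Q 0 := t.isLE₂ _ (rot_of_distTriang _ hT) 0 ‹_› ‹_›
  have : t.IsGE (Q⟦(-1 : ℤ)⟧) 1 := t.isGE_shift _ 0 (-1) 1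
  have : t.IsGE (Q⟦(-1 : ℤ)⟧) (-1) := t.isGE_of_ge _ (-1) 1
  have : t.IsGE A (-1) := t.isGE₂ _ (inv_rot_of_distTriang _ hT) (-1) ‹_› ‹_›
  have : t.IsLE (A⟦(-1 : ℤ)⟧) 0 := t.isLE_shift _ (-1) (-1) 0
  have : t.IsGE (A⟦(-1 : ℤ)⟧) 0 := t.isGE_shift _ (-1) (-1) 0
  let e := (shiftFunctorCompIsoId C (-1 : ℤ) 1 (by lia)).app A
  refine ⟨⟨A⟦(-1 : ℤ)⟧, t.le_of_isLE _ 0, t.ge_of_isGE _ 0⟩, ⟨Q, t.le_of_isLE _ 0, hQ⟩,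
    e.hom ≫ α, β, γ ≫ e.inv⟦(1 : ℤ)⟧', isomorphic_distinguished _ hT _ ?_⟩
  refine Triangle.isoMk _ _ e (Iso.refl _) (Iso.refl _) ?_ ?_ ?_
  · exact Category.comp_id _
  · exact (Category.comp_id _).trans (Category.id_comp _).symm
  · change (γ ≫ e.inv⟦(1 : ℤ)⟧') ≫ e.hom⟦(1 : ℤ)⟧' = 𝟙 Q ≫ γ
    simp [← Functor.map_comp]

lemma heart_admissibleMorphism : AbelianSubcategory.admissibleMorphism t.heart.ι = ⊤ := by
  ext X₁ X₂ f₁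
  simp only [MorphismProperty.top_apply, iff_true]
  intro X₃ f₂ f₃ hT
  have : t.IsGE (t.heart.ι.obj X₂) (-1) := t.isGE_of_ge _ (-1) 0
  have : t.IsLE ((t.heart.ι.obj X₁)⟦(1 : ℤ)⟧) (-1) := t.isLE_shift _ 0 1 (-1)
  have : t.IsLE ((t.heart.ι.obj X₁)⟦(1 : ℤ)⟧) 0 := t.isLE_of_le _ (-1) 0
  have : t.IsGE ((t.heart.ι.obj X₁)⟦(1 : ℤ)⟧) (-1) := t.isGE_shift _ 0 1 (-1)
  have : t.IsLE X₃ 0 := t.isLE₂ _ (rot_of_distTriang _ hT) 0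
    (inferInstanceAs (t.IsLE (t.heart.ι.obj X₂) 0)) ‹_›
  have : t.IsGE X₃ (-1) := t.isGE₂ _ (rot_of_distTriang _ hT) (-1) ‹_› ‹_›
  exact t.exists_distTriang_heart_of_isLE_of_isGE X₃

noncomputable instance : Abelian t.heart.FullSubcategory where
  has_kernels := ⟨fun f => AbelianSubcategory.hasKernel_of_admissibleMorphism
    t.heart_hom_shift_eq_zero f (by simp [heart_admissibleMorphism])⟩
  has_cokernels := ⟨fun f => AbelianSubcategory.hasCokernel_of_admissibleMorphism
    t.heart_hom_shift_eq_zero f (by simp [heart_admissibleMorphism])⟩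
  normalMonoOfMono i _ := by
    obtain ⟨X₃, π, δ, hT⟩ := AbelianSubcategory.exists_distinguished_triangle_of_mono
      t.heart_hom_shift_eq_zero t.heart_admissibleMorphism i
    exact ⟨⟨X₃, π, _, AbelianSubcategory.isLimitKernelForkOfDistTriang
      t.heart_hom_shift_eq_zero i π δ hT⟩⟩
  normalEpiOfEpi π _ := by
    obtain ⟨X₁, i, δ, hT⟩ := AbelianSubcategory.exists_distinguished_triangle_of_epi
      t.heart_hom_shift_eq_zero t.heart_admissibleMorphism π
    exact ⟨⟨X₁, i, _, AbelianSubcategory.isColimitCokernelCoforkOfDistTriang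
      t.heart_hom_shift_eq_zero i π δ hT⟩⟩

section mk'

variable (GE LT : C → Prop) (hGEiso : ∀ {X Y : C}, (X ≅ Y) → GE X → GE Y)
  (hLTiso : ∀ {X Y : C}, (X ≅ Y) → LT X → LT Y)
  (horth : ∀ {X Y : C}, GE X → LT Y → ∀ f : X ⟶ Y, f = 0)
  (hGEshift : ∀ X : C, GE X → GE (X⟦(1 : ℤ)⟧))
  (hLTshift : ∀ X : C, LT X → LT (X⟦(-1 : ℤ)⟧))
  (hfact : ∀ X : C, ∃ (A B : C) (f : A ⟶ X) (g : X ⟶ B) (w : B ⟶ A⟦(1 : ℤ)⟧),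
    GE A ∧ LT B ∧ Triangle.mk f g w ∈ distTriang C)

/-- The homological classes `D≥0 = GE` and `D<0 = LT` are Mathlib's cohomological
`t.le 0` and `t.ge 1`. -/
def mk' : TStructure C where
  le n X := GE (X⟦n⟧)
  ge n X := LT (X⟦n - 1⟧)
  le_isClosedUnderIsomorphisms n := ⟨fun e => hGEiso ((shiftFunctor C n).mapIso e)⟩
  ge_isClosedUnderIsomorphisms n := ⟨fun e => hLTiso ((shiftFunctor C (n - 1)).mapIso e)⟩
  le_shift n a n' h X := hGEiso ((shiftFunctorAdd' C a n' n h).app X)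
  ge_shift n a n' h X := hLTiso ((shiftFunctorAdd' C a (n' - 1) (n - 1) (by lia)).app X)
  zero' X Y f hX hY := horth (hGEiso ((shiftFunctorZero C ℤ).app X) hX)
    (hLTiso ((shiftFunctorZero' C (1 - 1 : ℤ) (by lia)).app Y) hY) f
  le_zero_le X hX := hGEiso ((shiftFunctorAdd' C 0 1 1 (by lia)).symm.app X) (hGEshift _ hX)
  ge_one_le X hX := hLTiso ((shiftFunctorAdd' C (1 - 1) (-1) (0 - 1) (by lia)).symm.app X)
    (hLTshift _ hX)
  exists_triangle_zero_one X := by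
    obtain ⟨A, B, f, g, w, hA, hB, hT⟩ := hfact X
    exact ⟨A, B, hGEiso ((shiftFunctorZero C ℤ).symm.app A) hA,
      hLTiso ((shiftFunctorZero' C (1 - 1 : ℤ) (by lia)).symm.app B) hB, f, g, w, hT⟩

lemma heart_mk' : (mk' GE LT hGEiso hLTiso horth hGEshift hLTshift hfact).heart =
    fun X => GE X ∧ LT (X⟦(-1 : ℤ)⟧) := by
  ext X
  exact and_congr
    ⟨hGEiso ((shiftFunctorZero C ℤ).app X), hGEiso ((shiftFunctorZero C ℤ).symm.app X)⟩ Iff.rfl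

end mk'

end TStructure

end CategoryTheory.Triangulated

/-- Let `D` be a pretriangulated category with a t-structure
`(D≥0, D<0)`, given by classes of objects `GE` and `LT` that are closed under
isomorphism and satisfy: (i) every morphism from an object of `GE` to an object of
`LT` is zero; (ii) `GE` is closed under `X ↦ X⟦1⟧` and `LT` under `X ↦ X⟦-1⟧`;
(iii) every object fits into a distinguished triangle `A → X → B → A⟦1⟧` with `A ∈ GE`
and `B ∈ LT`. Then the heart — the full subcategory of objects `X` with `X ∈ GE` and
`X⟦-1⟧ ∈ LT` — is an abelian category. -/
theorem heart_is_abelian {D : Type u} [Category.{v} D] [HasZeroObject D] [Preadditive D]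
    [HasShift D ℤ] [∀ n : ℤ, (shiftFunctor D n).Additive] [Pretriangulated D]
    (GE LT : D → Prop)
    (hGEiso : ∀ {X Y : D}, (X ≅ Y) → GE X → GE Y)
    (hLTiso : ∀ {X Y : D}, (X ≅ Y) → LT X → LT Y)
    (horth : ∀ {X Y : D}, GE X → LT Y → ∀ f : X ⟶ Y, f = 0)
    (hGEshift : ∀ X : D, GE X → GE ((shiftFunctor D (1 : ℤ)).obj X))
    (hLTshift : ∀ X : D, LT X → LT ((shiftFunctor D (-1 : ℤ)).obj X))
    (hfact : ∀ X : D, ∃ (A B : D) (f : A ⟶ X) (g : X ⟶ B)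
        (w : B ⟶ (shiftFunctor D (1 : ℤ)).obj A),
        GE A ∧ LT B ∧ Triangle.mk f g w ∈ distTriang D) :
    Nonempty
      (Abelian (ObjectProperty.FullSubcategory fun X : D => GE X ∧ LT ((shiftFunctor D (-1 : ℤ)).obj X))) := by
  rw [← Triangulated.TStructure.heart_mk' GE LT hGEiso hLTiso horth hGEshift hLTshift hfact]
  exact ⟨inferInstance⟩
end

section
/- Let C be a category with all finite limits and all finite colimits in which the 'pullout axiom' holds in the 1-categorical sense: a commutative square of C is a pushout square if and only if it is a pullback square. Then C is equivalent to the terminal category; equivalently, C has a zero object and every object of C is a zero object (all hom-sets of C are singletons). -/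
/-!
If pushout squares are pullback squares, then every epimorphism `f : X ⟶ Y` is an isomorphism,
because `f` is epi exactly when `Y` (with the identity maps) is the cokernel pair of `f`, and the
resulting pullback square exhibits `f` as a base change of `𝟙 Y`. The codiagonal `X ⨿ X ⟶ X` is
split epi, hence an isomorphism, so the two coprojections agree and any two maps out of `X`
coincide. Then every morphism is epi, hence an isomorphism; in particular every object is
isomorphic to the terminal one, and all hom-sets are singletons.
-/

open CategoryTheory CategoryTheory.Limits

universe v u

section

variable {C : Type u} [Category.{v} C]

lemma subsingleton_hom_of_mono_codiag {X : C} [HasBinaryCoproduct X X] [Mono (codiag X)]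
    (Z : C) : Subsingleton (X ⟶ Z) := by
  have inl_eq_inr : (coprod.inl : X ⟶ X ⨿ X) = coprod.inr := by
    rw [← cancel_mono (codiag X), coprod.inl_desc, coprod.inr_desc]
  refine ⟨fun g h => ?_⟩
  calc g = coprod.inl ≫ coprod.desc g h := (coprod.inl_desc g h).symm
    _ = coprod.inr ≫ coprod.desc g h := by rw [inl_eq_inr]
    _ = h := coprod.inr_desc g h

variable (C) in
def PushoutsArePullbacks : Prop :=
  ∀ {W X Y Z : C} (f : W ⟶ X) (g : W ⟶ Y) (h : X ⟶ Z) (i : Y ⟶ Z),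
    IsPushout f g h i → IsPullback f g h i

namespace PushoutsArePullbacks

lemma isIso_of_epi (hC : PushoutsArePullbacks C) {X Y : C} (f : X ⟶ Y) [Epi f] : IsIso f :=
  (hC f f (𝟙 Y) (𝟙 Y) ((epi_iff_isPushout f).mp ‹_›)).isIso_fst_of_isIso

lemma subsingleton_hom (hC : PushoutsArePullbacks C) [HasBinaryCoproducts C] (X Z : C) :
    Subsingleton (X ⟶ Z) := by
  have : IsSplitEpi (codiag X) := ⟨⟨⟨coprod.inl, coprod.inl_desc _ _⟩⟩⟩
  have := hC.isIso_of_epi (codiag X)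
  exact subsingleton_hom_of_mono_codiag Z

lemma isIso (hC : PushoutsArePullbacks C) [HasBinaryCoproducts C] {X Y : C} (f : X ⟶ Y) :
    IsIso f :=
  have : Epi f := ⟨fun g h _ => (hC.subsingleton_hom Y _).elim g h⟩
  hC.isIso_of_epi f

lemma nonempty_unique_hom (hC : PushoutsArePullbacks C) [HasTerminal C]
    [HasBinaryCoproducts C] (X Y : C) : Nonempty (Unique (X ⟶ Y)) :=
  have := hC.subsingleton_hom X Y
  have := hC.isIso (terminal.from Y)
  ⟨uniqueOfSubsingleton (terminal.from X ≫ inv (terminal.from Y))⟩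

lemma isZero (hC : PushoutsArePullbacks C) [HasTerminal C] [HasBinaryCoproducts C] (X : C) :
    IsZero X :=
  ⟨hC.nonempty_unique_hom X, (hC.nonempty_unique_hom · X)⟩

end PushoutsArePullbacks

end

/-- If a category `C` with all finite limits and finite colimits satisfies
the 1-categorical 'pullout axiom' — a commutative square is a pushout if and only if it
is a pullback — then `C` has a zero object and every object of `C` is a zero object
(i.e. `C` is equivalent to the terminal category). -/
theorem pullout_axiom_forces_trivial {C : Type u} [Category.{v} C]
    [HasFiniteLimits C] [HasFiniteColimits C]
    (pullout : ∀ {W X Y Z : C} (f : W ⟶ X) (g : W ⟶ Y) (h : X ⟶ Z) (i : Y ⟶ Z),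
      IsPushout f g h i ↔ IsPullback f g h i) :
    HasZeroObject C ∧ ∀ X : C, IsZero X := by
  have hC : PushoutsArePullbacks C := fun f g h i => (pullout f g h i).mp
  exact ⟨(hC.isZero (⊤_ C)).hasZeroObject, hC.isZero⟩
end
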